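/- Let (ψ_α) be a net of unital completely positive maps from a unital C*-algebra A to B(H) that converges to a *-representation π pointwise in the weak operator topology on a self-adjoint subset M with M ∪ {1} generating A, and suppose additionally ψ_α(m*m) → π(m*m) and ψ_α(mm*) → π(mm*) weakly for m ∈ M. Then ψ_α(m) → π(m) in the strong operator topology for every m ∈ M. -/

import Mathlib

/-! For a unital completely positive map the Kadison–Schwarz inequality
`ψ(m)* ψ(m) ≤ ψ(m* m)` gives
`‖ψ_α(m)ξ - π(m)ξ‖² ≤ Re⟪ψ_α(m* m)ξ, ξ⟫ - 2 Re⟪ψ_α(m)ξ, π(m)ξ⟫ + ‖π(m)ξ‖²`,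
and since `π` is a ⋆-homomorphism, `Re⟪π(m* m)ξ, ξ⟫ = ‖π(m)ξ‖²`, so by weak convergence the
right-hand side tends to `‖π(m)ξ‖² - 2‖π(m)ξ‖² + ‖π(m)ξ‖² = 0`. -/

open Filter
open scoped InnerProductSpace

/-- A linear map `φ` from a C*-algebra into `B(H)` is completely positive if all the
operator matrices `(φ(b_i* b_j))_{ij}` are positive, expressed via quadratic forms. -/
def IsCompletelyPositive {B H : Type*} [NormedRing B] [StarRing B] [CStarRing B]
    [NormedAlgebra ℂ B] [StarModule ℂ B] [CompleteSpace B]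
    [NormedAddCommGroup H] [InnerProductSpace ℂ H] [CompleteSpace H]
    (φ : B →L[ℂ] (H →L[ℂ] H)) : Prop :=
  ∀ (n : ℕ) (b : Fin n → B) (d : Fin n → (H →L[ℂ] H)),
    0 ≤ ∑ i, ∑ j, star (d i) * φ (star (b i) * b j) * d j

open scoped ComplexStarModule

theorem LinearMap.map_star_of_isSelfAdjoint {E F : Type*} [AddCommGroup E] [Module ℂ E]
    [StarAddMonoid E] [StarModule ℂ E] [AddCommGroup F] [Module ℂ F] [StarAddMonoid F]
    [StarModule ℂ F] (f : E →ₗ[ℂ] F) (hf : ∀ x, IsSelfAdjoint x → IsSelfAdjoint (f x)) (a : E) :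
    f (star a) = star (f a) := by
  rw [← realPart_add_I_smul_imaginaryPart a]
  simp only [star_add, star_smul, map_add, map_smul, (ℜ a).2.star_eq, (ℑ a).2.star_eq,
    (hf _ (ℜ a).2).star_eq, (hf _ (ℑ a).2).star_eq, Complex.star_def, Complex.conj_I]

theorem tendsto_of_norm_sq_le_of_tendsto_re_inner {𝕜 E ι : Type*} [RCLike 𝕜]
    [SeminormedAddCommGroup E] [InnerProductSpace 𝕜 E] {l : Filter ι} {f : ι → E} {y : E}
    {r : ι → ℝ} (hle : ∀ᶠ i in l, ‖f i‖ ^ 2 ≤ r i) (hr : Tendsto r l (nhds (‖y‖ ^ 2)))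
    (hinner : Tendsto (fun i => RCLike.re ⟪f i, y⟫_𝕜) l (nhds (‖y‖ ^ 2))) :
    Tendsto f l (nhds y) := by
  have hdist : Tendsto (fun i => r i - 2 * RCLike.re ⟪f i, y⟫_𝕜 + ‖y‖ ^ 2) l (nhds 0) := by
    convert (hr.sub (hinner.const_mul 2)).add_const (‖y‖ ^ 2) using 2
    ring
  have hsq : Tendsto (fun i => ‖f i - y‖ ^ 2) l (nhds 0) := by
    refine squeeze_zero' (Eventually.of_forall fun i => sq_nonneg _) ?_ hdist
    filter_upwards [hle] with i hi
    rw [norm_sub_sq (𝕜 := 𝕜)]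
    linarith
  rw [tendsto_iff_norm_sub_tendsto_zero]
  simpa [Real.sqrt_sq (norm_nonneg _)] using hsq.sqrt

theorem ContinuousLinearMap.re_inner_star_mul_self_apply {𝕜 E : Type*} [RCLike 𝕜]
    [NormedAddCommGroup E] [InnerProductSpace 𝕜 E] [CompleteSpace E] (T : E →L[𝕜] E) (x : E) :
    RCLike.re ⟪(star T * T) x, x⟫_𝕜 = ‖T x‖ ^ 2 :=
  (T.apply_norm_sq_eq_inner_adjoint_left x).symm

namespace IsCompletelyPositive

variable {A H : Type*} [NormedRing A] [StarRing A] [CStarRing A]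
    [NormedAlgebra ℂ A] [StarModule ℂ A] [CompleteSpace A]
    [NormedAddCommGroup H] [InnerProductSpace ℂ H] [CompleteSpace H]
    {φ : A →L[ℂ] (H →L[ℂ] H)}

theorem map_star_mul_self_nonneg (hφ : IsCompletelyPositive φ) (b : A) :
    0 ≤ φ (star b * b) := by
  simpa using hφ 1 (fun _ => b) (fun _ => 1)

theorem isSelfAdjoint_apply (hφ : IsCompletelyPositive φ) {a : A} (ha : IsSelfAdjoint a) :
    IsSelfAdjoint (φ a) := by
  let : CStarAlgebra A := {}
  let := CStarAlgebra.spectralOrder A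
  let := CStarAlgebra.spectralOrderedRing A
  let φPos : A →ₚ[ℂ] (H →L[ℂ] H) := .mk₀ φ fun x hx => by
    obtain ⟨b, rfl⟩ := CStarAlgebra.nonneg_iff_eq_star_mul_self.mp hx
    exact hφ.map_star_mul_self_nonneg b
  exact ha.map' φPos

theorem map_star (hφ : IsCompletelyPositive φ) (a : A) : φ (star a) = star (φ a) :=
  (φ : A →ₗ[ℂ] (H →L[ℂ] H)).map_star_of_isSelfAdjoint (fun _ => hφ.isSelfAdjoint_apply) a

/-- The Kadison–Schwarz inequality, from positivity of the matrix `(φ(bᵢ* bⱼ))` for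
`b = (1, a)`, compressed by `d = (-φ a, 1)`. -/
theorem star_mul_self_le (hφ : IsCompletelyPositive φ) (h1 : φ 1 = 1) (a : A) :
    star (φ a) * φ a ≤ φ (star a * a) := by
  have h := hφ 2 ![1, a] ![-φ a, 1]
  simp only [Fin.sum_univ_two, Matrix.cons_val_zero, Matrix.cons_val_one, star_one, mul_one,
    one_mul, h1, hφ.map_star, star_neg, neg_mul, mul_neg, neg_neg] at h
  rw [← sub_nonneg]
  convert h using 1
  abel

theorem norm_sq_apply_le (hφ : IsCompletelyPositive φ) (h1 : φ 1 = 1) (a : A) (ξ : H) :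
    ‖φ a ξ‖ ^ 2 ≤ RCLike.re ⟪φ (star a * a) ξ, ξ⟫_ℂ := by
  have h := (hφ.star_mul_self_le h1 a).re_inner_nonneg_left ξ
  rwa [sub_apply, inner_sub_left, map_sub, sub_nonneg,
    ContinuousLinearMap.re_inner_star_mul_self_apply] at h

end IsCompletelyPositive

theorem stmt10_general {A H ι : Type*} [NormedRing A] [StarRing A] [CStarRing A]
    [NormedAlgebra ℂ A] [StarModule ℂ A] [CompleteSpace A]
    [NormedAddCommGroup H] [InnerProductSpace ℂ H] [CompleteSpace H]
    [Preorder ι]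
    (ψ : ι → A →L[ℂ] (H →L[ℂ] H)) (hψu : ∀ α, ψ α 1 = 1)
    (hψcp : ∀ α, IsCompletelyPositive (ψ α))
    (π : A →⋆ₐ[ℂ] (H →L[ℂ] H))
    (M : Set A)
    (hwot : ∀ m ∈ M, ∀ ξ η : H,
      Tendsto (fun α => ⟪(ψ α m) ξ, η⟫_ℂ) atTop (nhds ⟪π m ξ, η⟫_ℂ))
    (hwot_sq : ∀ m ∈ M, ∀ ξ η : H,
      Tendsto (fun α => ⟪(ψ α (star m * m)) ξ, η⟫_ℂ) atTop (nhds ⟪π (star m * m) ξ, η⟫_ℂ)) :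
    ∀ m ∈ M, ∀ ξ : H, Tendsto (fun α => (ψ α m) ξ) atTop (nhds ((π m) ξ)) := by
  intro m hm ξ
  have hre {f : ι → ℂ} {z : ℂ} (h : Tendsto f atTop (nhds z)) :
      Tendsto (fun α => RCLike.re (f α)) atTop (nhds (RCLike.re z)) :=
    (RCLike.continuous_re.tendsto z).comp h
  refine tendsto_of_norm_sq_le_of_tendsto_re_inner (𝕜 := ℂ)
    (Eventually.of_forall fun α => (hψcp α).norm_sq_apply_le (hψu α) m ξ) ?_ ?_
  · have h := hre (hwot_sq m hm ξ ξ)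
    rwa [map_mul, map_star, ContinuousLinearMap.re_inner_star_mul_self_apply] at h
  · simpa only [inner_self_eq_norm_sq] using hre (hwot m hm ξ (π m ξ))

/-- If `(ψ_α)` is a net of unital completely positive maps `A → B(H)` converging to a
⋆-representation `π` pointwise in the weak operator topology on a self-adjoint subset `M`
generating `A` (together with `1`), and in addition `ψ_α(m*m) → π(m*m)` and
`ψ_α(mm*) → π(mm*)` weakly for `m ∈ M`, then `ψ_α(m) → π(m)` in the strong operator
topology for every `m ∈ M`. -/
theorem stmt10 {A H ι : Type*} [NormedRing A] [StarRing A] [CStarRing A]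
    [NormedAlgebra ℂ A] [StarModule ℂ A] [CompleteSpace A]
    [NormedAddCommGroup H] [InnerProductSpace ℂ H] [CompleteSpace H]
    [Preorder ι] [IsDirected ι (· ≤ ·)] [Nonempty ι]
    (ψ : ι → A →L[ℂ] (H →L[ℂ] H)) (hψu : ∀ α, ψ α 1 = 1)
    (hψcp : ∀ α, IsCompletelyPositive (ψ α))
    (π : A →⋆ₐ[ℂ] (H →L[ℂ] H)) (hπu : π 1 = 1)
    (M : Set A) (hMstar : ∀ m ∈ M, star m ∈ M)
    (hgen : (StarAlgebra.adjoin ℂ M).topologicalClosure = ⊤)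
    (hwot : ∀ m ∈ M, ∀ ξ η : H,
      Tendsto (fun α => ⟪(ψ α m) ξ, η⟫_ℂ) atTop (nhds ⟪π m ξ, η⟫_ℂ))
    (hwot_sq : ∀ m ∈ M, ∀ ξ η : H,
      Tendsto (fun α => ⟪(ψ α (star m * m)) ξ, η⟫_ℂ) atTop (nhds ⟪π (star m * m) ξ, η⟫_ℂ))
    (hwot_sq' : ∀ m ∈ M, ∀ ξ η : H,
      Tendsto (fun α => ⟪(ψ α (m * star m)) ξ, η⟫_ℂ) atTop (nhds ⟪π (m * star m) ξ, η⟫_ℂ)) :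
    ∀ m ∈ M, ∀ ξ : H, Tendsto (fun α => (ψ α m) ξ) atTop (nhds ((π m) ξ)) :=
  stmt10_general ψ hψu hψcp π M hwot hwot_sq
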